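/- arXiv:1902.07440 — 3 statements merged into one kernel-verified Lean document; each statement's English description precedes it below -/
import Mathlib

section
/- For a right-admissible OBP τ_{σ,k}: for every i ∈ {1,...,n} with i ≠ σ⁻¹(n), the orbit O_i contains neither the top strand nor the bottom strand of any block B_j with j ≠ i; and the orbit O_{σ⁻¹(n)} contains the bottom strand of B_n (strand K) in addition to the top and bottom strands of B_{σ⁻¹(n)}. -/
/-- An ordered block permutation (OBP) datum: a permutation `σ` of the `n` blocks,
block sizes `k i ≥ 1`, a block-index function `β` on the strands `{1,…,K}` (1-indexed),
and the map `τ` given by the defining formula of the paper. -/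
structure OBP (n : ℕ) where
  σ : Equiv.Perm (Fin n)
  k : Fin n → ℕ
  hk : ∀ i, 0 < k i
  β : ℕ → Fin n
  τ : ℕ → ℕ
  hβ : ∀ j : ℕ, 1 ≤ j → j ≤ ∑ i, k i →
    (∑ r ∈ Finset.Iio (β j), k r) < j ∧ j ≤ (∑ r ∈ Finset.Iio (β j), k r) + k (β j)
  hτ : ∀ j : ℕ, 1 ≤ j → j ≤ ∑ i, k i →
    τ j = j + (∑ i ∈ Finset.Iio (σ (β j)), k (σ.symm i)) - ∑ i ∈ Finset.Iio (β j), k i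

namespace OBP

variable {n : ℕ} (P : OBP n)

/-- Total number of strands. -/
def K : ℕ := ∑ i, P.k i

/-- Number of strands in blocks before block `i`. -/
def start (i : Fin n) : ℕ := ∑ r ∈ Finset.Iio i, P.k r

/-- Block `B i` as a set of strands. -/
def B (i : Fin n) : Finset ℕ := Finset.Icc (P.start i + 1) (P.start i + P.k i)

/-- Top strand of block `i` (its least element). -/
def top (i : Fin n) : ℕ := P.start i + 1

/-- Bottom strand of block `i` (its largest element). -/
def bot (i : Fin n) : ℕ := P.start i + P.k i

end OBP

/-- The strand (1-indexed) corresponding to `i : Fin n`. -/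
def strand {n : ℕ} (i : Fin n) : ℕ := (i : ℕ) + 1

/-- Orbit data for an OBP: for each `i`, `m i` is the least `m ≥ 1` such that the `m`-th
iterate of `τ` starting at strand `i` lands back in `{1,…,n}`. -/
structure OrbitData {n : ℕ} (P : OBP n) where
  m : Fin n → ℕ
  hm_pos : ∀ i, 1 ≤ m i
  hm_ret : ∀ i, 1 ≤ P.τ^[m i] (strand i) ∧ P.τ^[m i] (strand i) ≤ n
  hm_min : ∀ i j, 1 ≤ j → j < m i → ¬ P.τ^[j] (strand i) ≤ n

namespace OrbitData

variable {n : ℕ} {P : OBP n} (D : OrbitData P)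

/-- The orbit `O i` of strand `i` until (excluding) its first return to `{1,…,n}`. -/
def O (i : Fin n) : Finset ℕ := (Finset.range (D.m i)).image fun j => P.τ^[j] (strand i)

/-- The matrix `a i j = |O i ∩ B j|`. -/
def A : Matrix (Fin n) (Fin n) ℕ := fun i j => (D.O i ∩ P.B j).card

end OrbitData

/-- The index of the last block, `n` in the paper's 1-indexed notation. -/
def lastIdx (n : ℕ) (hn : 0 < n) : Fin n := ⟨n - 1, Nat.sub_lt hn Nat.one_pos⟩

/-- Admissibility of an OBP, following Definition 3.2 of the paper. -/
structure Admissible {n : ℕ} (hn : 0 < n) (P : OBP n) (D : OrbitData P) : Prop where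
  /-- (i) the orbits cover all strands -/
  cover : Finset.univ.biUnion D.O = Finset.Icc 1 P.K
  /-- (ii) the first-return map to `{1,…,n}` equals `σ` -/
  firstRet : ∀ i, P.τ^[D.m i] (strand i) = strand (P.σ i)
  /-- (iii) the matrix `A` is irreducible -/
  irred : ∀ i j, ∃ N, 0 < (D.A ^ N) i j
  /-- (iv) each orbit `O i` contains the top strand of `B i` … -/
  top_mem : ∀ i, P.top i ∈ D.O i
  /-- (iv) … and the bottom strand of `B i`, except possibly for blocks `n` and `σ⁻¹(n)` … -/
  bot_mem : ∀ i, i ≠ lastIdx n hn → i ≠ P.σ.symm (lastIdx n hn) → P.bot i ∈ D.O i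
  /-- (iv) … whose two bottom strands belong to just one of the orbits `O (σ⁻¹ n)` (left of `z₁`)
  or `O n` (right of `z₁`). -/
  excep : Xor'
    (P.bot (lastIdx n hn) ∈ D.O (P.σ.symm (lastIdx n hn)) ∧
      P.bot (P.σ.symm (lastIdx n hn)) ∈ D.O (P.σ.symm (lastIdx n hn)))
    (P.bot (lastIdx n hn) ∈ D.O (lastIdx n hn) ∧
      P.bot (P.σ.symm (lastIdx n hn)) ∈ D.O (lastIdx n hn))

private lemma strand_le {n : ℕ} (i : Fin n) : strand i ≤ n := i.isLt

private lemma key_inj {n : ℕ} (hn : 0 < n) (P : OBP n) (D : OrbitData P)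
    (hadm : Admissible hn P D) (i i' : Fin n) (a b : ℕ)
    (ha : a < D.m i) (hb : b < D.m i')
    (heq : P.τ^[a] (strand i) = P.τ^[b] (strand i')) : i = i' := by
  have hret : ∀ j : Fin n, P.τ^[D.m j] (strand j) = strand (P.σ j) := hadm.firstRet
  rcases Nat.eq_zero_or_pos a with rfl | hapos
  · rcases Nat.eq_zero_or_pos b with rfl | hbpos
    · simp only [Function.iterate_zero, id] at heq
      exact Fin.ext (Nat.succ_injective heq)
    · exact absurd (by rw [← heq]; simpa using strand_le i) (D.hm_min i' b hbpos hb)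
  · rcases Nat.eq_zero_or_pos b with rfl | hbpos
    · exact absurd (by rw [heq]; simpa using strand_le i') (D.hm_min i a hapos ha)
    · set s := D.m i - a with hs
      set t := D.m i' - b with ht
      have hsa : s + a = D.m i := Nat.sub_add_cancel ha.le
      have htb : t + b = D.m i' := Nat.sub_add_cancel hb.le
      have hs1 : 1 ≤ s := Nat.le_sub_of_add_le (by omega)
      have ht1 : 1 ≤ t := Nat.le_sub_of_add_le (by omega)
      have hsret : P.τ^[s] (P.τ^[a] (strand i)) = strand (P.σ i) := by
        rw [← Function.iterate_add_apply, hsa, hret]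
      have htret : P.τ^[t] (P.τ^[b] (strand i')) = strand (P.σ i') := by
        rw [← Function.iterate_add_apply, htb, hret]
      have hst : s = t := by
        rcases lt_trichotomy s t with h | h | h
        · exfalso
          have : P.τ^[s + b] (strand i') ≤ n := by
            rw [Function.iterate_add_apply, ← heq, hsret]; exact strand_le _
          exact D.hm_min i' (s + b) (by omega) (by omega) this
        · exact h
        · exfalso
          have : P.τ^[t + a] (strand i) ≤ n := by
            rw [Function.iterate_add_apply, heq, htret]; exact strand_le _
          exact D.hm_min i (t + a) (by omega) (by omega) this
      have : strand (P.σ i) = strand (P.σ i') := by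
        rw [← hsret, ← htret, hst, heq]
      exact P.σ.injective (Fin.ext (Nat.succ_injective this))

private lemma orbits_disjoint {n : ℕ} (hn : 0 < n) (P : OBP n) (D : OrbitData P)
    (hadm : Admissible hn P D) {i i' : Fin n} {x : ℕ}
    (hx : x ∈ D.O i) (hx' : x ∈ D.O i') : i = i' := by
  simp only [OrbitData.O, Finset.mem_image, Finset.mem_range] at hx hx'
  obtain ⟨a, ha, rfl⟩ := hx
  obtain ⟨b, hb, heq⟩ := hx'
  exact key_inj hn P D hadm i i' a b ha hb heq.symm

/-- for a right-admissible OBP, no orbit `O i` with `i ≠ σ⁻¹(n)` contains the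
top or bottom strand of any other block `B j`, while `O (σ⁻¹ n)` contains the bottom strand
of `B n` (strand `K`) in addition to the top and bottom strands of `B (σ⁻¹ n)`. -/
theorem obp_right_admissible_strands {n : ℕ} (hn : 0 < n) (P : OBP n) (D : OrbitData P)
    (hadm : Admissible hn P D)
    (hright : P.bot (lastIdx n hn) ∈ D.O (P.σ.symm (lastIdx n hn)) ∧
      P.bot (P.σ.symm (lastIdx n hn)) ∈ D.O (P.σ.symm (lastIdx n hn))) :
    (∀ i : Fin n, i ≠ P.σ.symm (lastIdx n hn) → ∀ j : Fin n, j ≠ i →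
      P.top j ∉ D.O i ∧ P.bot j ∉ D.O i) ∧
    (P.bot (lastIdx n hn) ∈ D.O (P.σ.symm (lastIdx n hn)) ∧
      P.top (P.σ.symm (lastIdx n hn)) ∈ D.O (P.σ.symm (lastIdx n hn)) ∧
      P.bot (P.σ.symm (lastIdx n hn)) ∈ D.O (P.σ.symm (lastIdx n hn))) := by
  constructor
  · intro i hi j hji
    constructor
    · intro hmem
      exact hji (orbits_disjoint hn P D hadm (hadm.top_mem j) hmem)
    · intro hmem
      by_cases hjl : j = lastIdx n hn
      · subst hjl
        exact hi (orbits_disjoint hn P D hadm hmem hright.1)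
      · by_cases hjs : j = P.σ.symm (lastIdx n hn)
        · subst hjs
          exact hi (orbits_disjoint hn P D hadm hmem hright.2)
        · exact hji (orbits_disjoint hn P D hadm (hadm.bot_mem j hjl hjs) hmem)
  · exact ⟨hright.1, hadm.top_mem _, hright.2⟩
end

section
/- Suppose λ > 1 and l ∈ ℝⁿ is a positive vector with A l = λ l, where A is the matrix of an admissible OBP. Decompose each orbit O_{i+1} = O'_{i+1} ⊔ {top strand of B_{i+1}} ⊔ O''_{i+1}. Define x_i = (λ−1)⁻¹ Σ_{j∈O'_{i+1}} l_{β(j)} and y_{σ(i+1)−1} = (λ−1)⁻¹ Σ_{j∈O''_{i+1}} l_{β(j)}. Then x_i + y_{σ(i+1)−1} = l_{i+1} for all i = 1,...,n−1. -/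
/-- with `λ > 1` and `l` a positive eigenvector of the matrix `A` of an
admissible OBP, decomposing the orbit `O (i+1)` as `O' ⊔ {top strand of B (i+1)} ⊔ O''`
(where the top strand is visited at step `t` of the orbit), the quantities
`x i = (λ−1)⁻¹ ∑_{j ∈ O'} l (β j)` and `y (σ(i+1)−1) = (λ−1)⁻¹ ∑_{j ∈ O''} l (β j)`
satisfy `x i + y (σ(i+1)−1) = l (i+1)`. -/
theorem obp_edge_lengths {n : ℕ} (hn : 0 < n) (P : OBP n) (D : OrbitData P)
    (hadm : Admissible hn P D)
    (lam : ℝ) (hlam : 1 < lam) (l : Fin n → ℝ) (hl : ∀ i, 0 < l i)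
    (heig : ∀ i, ∑ j, (D.A i j : ℝ) * l j = lam * l i)
    (b : Fin n) (hb : b ≠ ⟨0, hn⟩)
    (t : ℕ) (ht : t < D.m b) (htop : P.τ^[t] (strand b) = P.top b) :
    (lam - 1)⁻¹ * (∑ j ∈ Finset.range t, l (P.β (P.τ^[j] (strand b)))) +
      (lam - 1)⁻¹ * (∑ j ∈ Finset.Ioo t (D.m b), l (P.β (P.τ^[j] (strand b)))) = l b := by
  classical
  set s := strand b with hs
  set m := D.m b with hmdef
  -- n ≤ K
  have hnK : n ≤ P.K := by
    have h1 : (n : ℕ) = ∑ _i : Fin n, 1 := by simp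
    have h2 : ∑ _i : Fin n, 1 ≤ ∑ i, P.k i :=
      Finset.sum_le_sum (fun i _ => P.hk i)
    calc n = ∑ _i : Fin n, 1 := h1
      _ ≤ ∑ i, P.k i := h2
      _ = P.K := rfl
  -- start c + k c ≤ K
  have hstartK : ∀ c : Fin n, P.start c + P.k c ≤ P.K := by
    intro c
    have h1 : P.start c + P.k c = ∑ r ∈ insert c (Finset.Iio c), P.k r := by
      rw [Finset.sum_insert (by simp)]
      simp [OBP.start, add_comm]
    rw [h1]
    exact Finset.sum_le_sum_of_subset (Finset.subset_univ _)
  -- monotonicity of blocks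
  have hmono : ∀ a c : Fin n, a < c → P.start a + P.k a ≤ P.start c := by
    intro a c hac
    have h1 : P.start a + P.k a = ∑ r ∈ insert a (Finset.Iio a), P.k r := by
      rw [Finset.sum_insert (by simp)]
      simp [OBP.start, add_comm]
    rw [h1]
    apply Finset.sum_le_sum_of_subset
    intro r hr
    simp only [Finset.mem_insert, Finset.mem_Iio] at hr ⊢
    rcases hr with rfl | hr
    · exact hac
    · exact hr.trans hac
  -- τ maps [1,K] to [1,K]
  have hτK : ∀ x, 1 ≤ x → x ≤ P.K → 1 ≤ P.τ x ∧ P.τ x ≤ P.K := by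
    intro x h1 h2
    obtain ⟨hβ1, hβ2⟩ := P.hβ x h1 h2
    rw [P.hτ x h1 h2]
    have hS1 : (∑ i ∈ Finset.Iio (P.σ (P.β x)), P.k (P.σ.symm i)) + P.k (P.β x) ≤ P.K := by
      have e : P.k (P.β x) = P.k (P.σ.symm (P.σ (P.β x))) := by simp
      rw [e]
      have h3 : (∑ i ∈ Finset.Iio (P.σ (P.β x)), P.k (P.σ.symm i)) + P.k (P.σ.symm (P.σ (P.β x)))
          = ∑ i ∈ insert (P.σ (P.β x)) (Finset.Iio (P.σ (P.β x))), P.k (P.σ.symm i) := by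
        rw [Finset.sum_insert (by simp)]; ring
      rw [h3]
      have h4 : ∑ i ∈ insert (P.σ (P.β x)) (Finset.Iio (P.σ (P.β x))), P.k (P.σ.symm i)
          ≤ ∑ i, P.k (P.σ.symm i) :=
        Finset.sum_le_sum_of_subset (Finset.subset_univ _)
      have h5 : ∑ i, P.k (P.σ.symm i) = ∑ i, P.k i := P.σ.symm.sum_comp P.k
      calc _ ≤ ∑ i, P.k (P.σ.symm i) := h4
        _ = P.K := h5
    omega
  -- all iterates stay in [1,K]
  have hiter : ∀ j, 1 ≤ P.τ^[j] s ∧ P.τ^[j] s ≤ P.K := by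
    intro j
    induction j with
    | zero =>
      constructor
      · simp [hs, strand]
      · simp only [Function.iterate_zero, id]
        have : s ≤ n := by
          have := b.isLt; simp [hs, strand]
        omega
    | succ j ih =>
      rw [Function.iterate_succ_apply']
      exact hτK _ ih.1 ih.2
  -- block membership characterizes β
  have hblock : ∀ x, 1 ≤ x → x ≤ P.K → ∀ c, (x ∈ P.B c ↔ P.β x = c) := by
    intro x h1 h2 c
    obtain ⟨hβ1, hβ2⟩ := P.hβ x h1 h2
    constructor
    · intro hxc
      simp only [OBP.B, Finset.mem_Icc] at hxc
      by_contra hne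
      rcases lt_or_gt_of_ne hne with hlt | hlt
      · have := hmono (P.β x) c hlt
        simp only [OBP.start] at *
        omega
      · have := hmono c (P.β x) hlt
        simp only [OBP.start] at *
        omega
    · rintro rfl
      simp only [OBP.B, Finset.mem_Icc, OBP.start]
      omega
  -- β of the top strand of b is b
  have htopK : 1 ≤ P.top b ∧ P.top b ≤ P.K := by
    have := hstartK b
    have := P.hk b
    constructor
    · simp [OBP.top]
    · simp only [OBP.top]; omega
  have hβtop : P.β (P.top b) = b := by
    rw [← hblock _ htopK.1 htopK.2 b]
    simp only [OBP.B, Finset.mem_Icc, OBP.top]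
    have := P.hk b
    omega
  -- the step map is injective on range m
  have hkey : ∀ j1 j2, j1 < j2 → j2 < m → P.τ^[j1] s ≠ P.τ^[j2] s := by
    intro j1 j2 hlt hm2 heq
    have e1 : m - (j2 - j1) = j1 + (m - j2) := by omega
    have e2 : m = j2 + (m - j2) := by omega
    have h1 : P.τ^[m - (j2 - j1)] s = P.τ^[m] s := by
      rw [e1]
      conv_rhs => rw [e2]
      rw [add_comm j1, add_comm j2, Function.iterate_add_apply, Function.iterate_add_apply, heq]
    have hret := D.hm_ret b
    have hmin := D.hm_min b (m - (j2 - j1)) (by omega) (by omega)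
    apply hmin
    rw [← hs, h1]
    exact hret.2
  have hinj : ∀ j1 ∈ Finset.range m, ∀ j2 ∈ Finset.range m,
      P.τ^[j1] s = P.τ^[j2] s → j1 = j2 := by
    intro j1 h1 j2 h2 heq
    simp only [Finset.mem_range] at h1 h2
    rcases lt_trichotomy j1 j2 with h | h | h
    · exact absurd heq (hkey j1 j2 h h2)
    · exact h
    · exact absurd heq.symm (hkey j2 j1 h h1)
  -- sum over the orbit equals the sum over steps
  have hsum_orbit : ∑ x ∈ D.O b, l (P.β x) = ∑ j ∈ Finset.range m, l (P.β (P.τ^[j] s)) := by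
    rw [OrbitData.O, ← hs, ← hmdef, Finset.sum_image hinj]
  -- the eigenvector identity over the orbit
  have horbK : ∀ x ∈ D.O b, 1 ≤ x ∧ x ≤ P.K := by
    intro x hx
    simp only [OrbitData.O, Finset.mem_image, Finset.mem_range] at hx
    obtain ⟨j, _, rfl⟩ := hx
    exact hiter j
  have hAc : ∀ c, ((D.A b c : ℝ)) * l c
      = ∑ x ∈ (D.O b).filter (fun x => P.β x = c), l (P.β x) := by
    intro c
    have hfe : (D.O b).filter (fun x => P.β x = c) = D.O b ∩ P.B c := by
      ext x
      simp only [Finset.mem_filter, Finset.mem_inter]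
      constructor
      · rintro ⟨hx, hβx⟩
        exact ⟨hx, (hblock x (horbK x hx).1 (horbK x hx).2 c).mpr hβx⟩
      · rintro ⟨hx, hxB⟩
        exact ⟨hx, (hblock x (horbK x hx).1 (horbK x hx).2 c).mp hxB⟩
    have h1 : ∑ x ∈ (D.O b).filter (fun x => P.β x = c), l (P.β x)
        = ∑ _x ∈ (D.O b).filter (fun x => P.β x = c), l c := by
      apply Finset.sum_congr rfl
      intro x hx
      simp only [Finset.mem_filter] at hx
      rw [hx.2]
    rw [h1, Finset.sum_const, hfe, OrbitData.A, nsmul_eq_mul]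
  have htotal : ∑ j ∈ Finset.range m, l (P.β (P.τ^[j] s)) = lam * l b := by
    rw [← hsum_orbit, ← heig b]
    rw [Finset.sum_congr rfl (fun c _ => hAc c)]
    rw [← Finset.sum_fiberwise (D.O b) (fun x => P.β x) (fun x => l (P.β x))]
  -- split the sum at t
  have hsplit : ∑ j ∈ Finset.range m, l (P.β (P.τ^[j] s))
      = (∑ j ∈ Finset.range t, l (P.β (P.τ^[j] s))) + l b
        + ∑ j ∈ Finset.Ioo t m, l (P.β (P.τ^[j] s)) := by
    have h1 : Finset.range m = Finset.Ico 0 m := by rw [Finset.range_eq_Ico]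
    rw [h1, ← Finset.sum_Ico_consecutive _ (Nat.zero_le (t+1)) (by omega : t + 1 ≤ m)]
    rw [← Finset.range_eq_Ico, Finset.sum_range_succ]
    have h2 : Finset.Ico (t+1) m = Finset.Ioo t m := rfl
    rw [h2, htop, hβtop]
  have hlam1 : lam - 1 ≠ 0 := by linarith
  have hsum : (∑ j ∈ Finset.range t, l (P.β (P.τ^[j] s)))
      + ∑ j ∈ Finset.Ioo t m, l (P.β (P.τ^[j] s)) = (lam - 1) * l b := by
    have := hsplit
    rw [htotal] at this
    linarith [this]
  rw [← mul_add, hsum, inv_mul_cancel_left₀ hlam1]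
end

section
/- Let τ = τ_{σ,k} be an admissible OBP. Then as a permutation of {1,...,K}, τ has exactly as many cycles as σ has as a permutation of {1,...,n}; in particular τ has at most n cycles. Moreover the cycle of τ containing i ∈ {1,...,n} is the union of the orbits O_i ∪ O_{σ(i)} ∪ ⋯ ∪ O_{σ⁻¹(i)} over the σ-cycle of i. -/
/-- The setoid of "same cycle" for a permutation; its quotient counts the cycles
(including fixed points). -/
def sameCycleSetoid {α : Type*} (f : Equiv.Perm α) : Setoid α :=
  ⟨f.SameCycle, ⟨Equiv.Perm.SameCycle.refl f, fun h => h.symm, fun h h' => h.trans h'⟩⟩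

section Aux

open Finset

variable {n : ℕ} {P : OBP n} {D : OrbitData P}

lemma obp_n_le_K (P : OBP n) : n ≤ P.K := by
  have h : ∑ _i : Fin n, 1 ≤ ∑ i, P.k i := Finset.sum_le_sum fun i _ => P.hk i
  simpa [OBP.K] using h

lemma obp_strand_mem (P : OBP n) (i : Fin n) : strand i ∈ Finset.Icc 1 P.K := by
  simp only [Finset.mem_Icc, strand]
  exact ⟨Nat.le_add_left 1 _, le_trans (Nat.succ_le_of_lt i.isLt) (obp_n_le_K P)⟩

/-- strand `i` as an element of the subtype. -/
def obp_S (P : OBP n) (i : Fin n) : (Finset.Icc 1 P.K : Finset ℕ) :=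
  ⟨strand i, obp_strand_mem P i⟩

lemma obp_coe_pow (e : Equiv.Perm (Finset.Icc 1 P.K)) (he : ∀ s, (e s : ℕ) = P.τ s) :
    ∀ (p : ℕ) (s : (Finset.Icc 1 P.K : Finset ℕ)), (((e ^ p) s : ℕ)) = P.τ^[p] s := by
  intro p
  induction p with
  | zero => intro s; simp
  | succ p ih =>
    intro s
    calc (((e ^ (p + 1)) s : ℕ)) = ((e ^ p) (e s) : ℕ) := by
          rw [pow_succ, Equiv.Perm.mul_apply]
      _ = P.τ^[p] ((e s : ℕ)) := ih _
      _ = P.τ^[p] (P.τ s) := by rw [he]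
      _ = P.τ^[p + 1] s := (Function.iterate_succ_apply _ _ _).symm

/-- One-sided uniqueness helper. -/
lemma obp_unique_rep_aux (e : Equiv.Perm (Finset.Icc 1 P.K)) (he : ∀ s, (e s : ℕ) = P.τ s)
    {j j' : Fin n} {r r' : ℕ} (hle : r ≤ r') (hr : r < D.m j) (hr' : r' < D.m j')
    (h : P.τ^[r] (strand j) = P.τ^[r'] (strand j')) : j = j' ∧ r = r' := by
  have h1 : ((e ^ r) (obp_S P j) : ℕ) = ((e ^ r') (obp_S P j') : ℕ) := by
    rw [obp_coe_pow e he, obp_coe_pow e he]; exact h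
  have h2 : (e ^ r) (obp_S P j) = (e ^ r') (obp_S P j') := Subtype.coe_injective h1
  have hsplit : (e ^ r') (obp_S P j') = (e ^ r) ((e ^ (r' - r)) (obp_S P j')) := by
    rw [← Equiv.Perm.mul_apply, ← pow_add, Nat.add_sub_cancel' hle]
  have h3 : obp_S P j = (e ^ (r' - r)) (obp_S P j') :=
    (e ^ r).injective (by rw [h2, hsplit])
  have h4 : strand j = P.τ^[r' - r] (strand j') := by
    have := congrArg (Subtype.val) h3
    rwa [obp_coe_pow e he] at this
  have hrr : r' - r = 0 := by
    by_contra hne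
    have h1le : 1 ≤ r' - r := Nat.one_le_iff_ne_zero.2 hne
    have hlt : r' - r < D.m j' := lt_of_le_of_lt (Nat.sub_le _ _) hr'
    exact D.hm_min j' (r' - r) h1le hlt (by rw [← h4]; exact Nat.succ_le_of_lt j.isLt)
  have hre : r = r' := le_antisymm hle (by omega)
  have hje : j = j' := by
    have : strand j = strand j' := by rw [h4, hrr]; simp
    exact Fin.ext (by simpa [strand] using this)
  exact ⟨hje, hre⟩

lemma obp_unique_rep (e : Equiv.Perm (Finset.Icc 1 P.K)) (he : ∀ s, (e s : ℕ) = P.τ s)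
    {j j' : Fin n} {r r' : ℕ} (hr : r < D.m j) (hr' : r' < D.m j')
    (h : P.τ^[r] (strand j) = P.τ^[r'] (strand j')) : j = j' ∧ r = r' := by
  rcases le_total r r' with hle | hle
  · exact obp_unique_rep_aux e he hle hr hr' h
  · obtain ⟨a, b⟩ := obp_unique_rep_aux e he hle hr' hr h.symm
    exact ⟨a.symm, b.symm⟩

/-- Cumulative return times along the σ-orbit. -/
def obp_M (D : OrbitData P) (i : Fin n) (t : ℕ) : ℕ :=
  ∑ u ∈ Finset.range t, D.m ((P.σ ^ u) i)

lemma obp_iter_M {hn : 0 < n} (hadm : Admissible hn P D) (i : Fin n) :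
    ∀ t, P.τ^[obp_M D i t] (strand i) = strand ((P.σ ^ t) i) := by
  intro t
  induction t with
  | zero => simp [obp_M]
  | succ t ih =>
    have hM : obp_M D i (t + 1) = D.m ((P.σ ^ t) i) + obp_M D i t := by
      rw [obp_M, Finset.sum_range_succ, add_comm]; rfl
    rw [hM, Function.iterate_add_apply, ih, hadm.firstRet, pow_succ']
    rfl

lemma obp_decomp (D : OrbitData P) (i : Fin n) (p : ℕ) :
    ∃ t r, r < D.m ((P.σ ^ t) i) ∧ p = obp_M D i t + r := by
  induction p with
  | zero => exact ⟨0, 0, D.hm_pos i |>.trans_eq (by simp), by simp [obp_M]⟩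
  | succ p ih =>
    obtain ⟨t, r, hr, hp⟩ := ih
    rcases lt_or_ge (r + 1) (D.m ((P.σ ^ t) i)) with h | h
    · exact ⟨t, r + 1, h, by omega⟩
    · have hre : r + 1 = D.m ((P.σ ^ t) i) := le_antisymm hr h
      refine ⟨t + 1, 0, D.hm_pos _, ?_⟩
      simp only [obp_M, Finset.sum_range_succ] at hp ⊢
      omega

/-- The key orbit description. -/
lemma obp_orbit_iff {hn : 0 < n} (hadm : Admissible hn P D)
    (e : Equiv.Perm (Finset.Icc 1 P.K)) (he : ∀ s, (e s : ℕ) = P.τ s)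
    (i : Fin n) (s : ℕ) :
    (∃ p : ℕ, P.τ^[p] (strand i) = s) ↔ ∃ j : Fin n, P.σ.SameCycle i j ∧ s ∈ D.O j := by
  constructor
  · rintro ⟨p, rfl⟩
    obtain ⟨t, r, hr, rfl⟩ := obp_decomp D i p
    refine ⟨(P.σ ^ t) i, ⟨(t : ℤ), by rw [zpow_natCast]⟩, ?_⟩
    rw [OrbitData.O, Finset.mem_image]
    refine ⟨r, Finset.mem_range.2 hr, ?_⟩
    rw [add_comm, Function.iterate_add_apply, obp_iter_M hadm]
  · rintro ⟨j, hsc, hs⟩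
    rw [OrbitData.O, Finset.mem_image] at hs
    obtain ⟨r, hr, rfl⟩ := hs
    obtain ⟨t, -, ht⟩ := hsc.exists_pow_eq'
    refine ⟨r + obp_M D i t, ?_⟩
    rw [Function.iterate_add_apply, obp_iter_M hadm, ht]

lemma obp_exists_block {hn : 0 < n} (hadm : Admissible hn P D)
    {s : ℕ} (hs : s ∈ Finset.Icc 1 P.K) : ∃ j : Fin n, s ∈ D.O j := by
  rw [← hadm.cover, Finset.mem_biUnion] at hs
  obtain ⟨j, -, hj⟩ := hs
  exact ⟨j, hj⟩

end Aux

/-- for an admissible OBP, `τ` (as a permutation of `{1,…,K}`) has exactly as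
many cycles as `σ` (as a permutation of `{1,…,n}`), in particular at most `n` cycles;
moreover the cycle of `τ` containing strand `i ≤ n` is the union of the orbits `O j` over
the `σ`-cycle of `i`. -/
theorem obp_cycle_count {n : ℕ} (hn : 0 < n) (P : OBP n) (D : OrbitData P)
    (hadm : Admissible hn P D)
    (e : Equiv.Perm (Finset.Icc 1 P.K)) (he : ∀ s : Finset.Icc 1 P.K, (e s : ℕ) = P.τ s) :
    Nat.card (Quotient (sameCycleSetoid e)) = Nat.card (Quotient (sameCycleSetoid P.σ)) ∧
    Nat.card (Quotient (sameCycleSetoid e)) ≤ n ∧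
    (∀ i : Fin n, ∀ s : ℕ, 1 ≤ s → s ≤ P.K →
      ((∃ p : ℕ, P.τ^[p] (strand i) = s) ↔ ∃ j : Fin n, P.σ.SameCycle i j ∧ s ∈ D.O j)) := by
  classical
  have part3 : ∀ i : Fin n, ∀ s : ℕ, 1 ≤ s → s ≤ P.K →
      ((∃ p : ℕ, P.τ^[p] (strand i) = s) ↔ ∃ j : Fin n, P.σ.SameCycle i j ∧ s ∈ D.O j) :=
    fun i s _ _ => obp_orbit_iff hadm e he i s
  have hex : ∀ s : (Finset.Icc 1 P.K : Finset ℕ),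
      ∃ j : Fin n, ∃ r, r < D.m j ∧ P.τ^[r] (strand j) = (s : ℕ) := by
    intro s
    obtain ⟨j, hj⟩ := obp_exists_block hadm s.2
    rw [OrbitData.O, Finset.mem_image] at hj
    obtain ⟨r, hr, hrs⟩ := hj
    exact ⟨j, r, Finset.mem_range.1 hr, hrs⟩
  let b : (Finset.Icc 1 P.K : Finset ℕ) → Fin n := fun s => (hex s).choose
  have hb : ∀ s, ∃ r, r < D.m (b s) ∧ P.τ^[r] (strand (b s)) = (s : ℕ) :=
    fun s => (hex s).choose_spec
  have hbmem : ∀ s, (s : ℕ) ∈ D.O (b s) := by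
    intro s
    obtain ⟨r, hr, hrs⟩ := hb s
    rw [OrbitData.O, Finset.mem_image]
    exact ⟨r, Finset.mem_range.2 hr, hrs⟩
  have hbu : ∀ (s : (Finset.Icc 1 P.K : Finset ℕ)) (j : Fin n), (s : ℕ) ∈ D.O j → b s = j := by
    intro s j hj
    obtain ⟨r, hr, hrs⟩ := hb s
    rw [OrbitData.O, Finset.mem_image] at hj
    obtain ⟨r', hr', hrs'⟩ := hj
    exact (obp_unique_rep e he hr (Finset.mem_range.1 hr') (hrs.trans hrs'.symm)).1
  -- reaching an element from the strand of its block, in the subtype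
  have hreach : ∀ (x : Fin n) (s : (Finset.Icc 1 P.K : Finset ℕ)) (p : ℕ),
      P.τ^[p] (strand x) = (s : ℕ) → e.SameCycle (obp_S P x) s := by
    intro x s p hp
    refine ⟨(p : ℤ), ?_⟩
    rw [zpow_natCast]
    have hc : (((e ^ p) (obp_S P x)) : ℕ) = (s : ℕ) := by
      rw [obp_coe_pow e he]; exact hp
    exact Subtype.coe_injective hc
  have wd : ∀ s s' : (Finset.Icc 1 P.K : Finset ℕ), e.SameCycle s s' →
      Quot.mk (sameCycleSetoid P.σ).r (b s) = Quot.mk (sameCycleSetoid P.σ).r (b s') := by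
    intro s s' hsc
    obtain ⟨p, -, hp⟩ := hsc.exists_pow_eq'
    have hps : P.τ^[p] ((s : ℕ)) = (s' : ℕ) := by
      rw [← obp_coe_pow e he, hp]
    obtain ⟨r, hr, hrs⟩ := hb s
    have : P.τ^[p + r] (strand (b s)) = (s' : ℕ) := by
      rw [Function.iterate_add_apply, hrs, hps]
    obtain ⟨j, hscj, hj⟩ := (obp_orbit_iff hadm e he (b s) (s' : ℕ)).1 ⟨p + r, this⟩
    have := hbu s' j hj
    rw [this]
    exact Quot.sound hscj
  let f : Quotient (sameCycleSetoid e) → Quotient (sameCycleSetoid P.σ) :=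
    Quot.lift (fun s => Quot.mk (sameCycleSetoid P.σ).r (b s)) wd
  have hsurj : Function.Surjective f := by
    intro q
    obtain ⟨j, rfl⟩ := Quot.exists_rep q
    refine ⟨Quot.mk _ (obp_S P j), ?_⟩
    have hmem : ((obp_S P j : ℕ)) ∈ D.O j := by
      rw [OrbitData.O, Finset.mem_image]
      exact ⟨0, Finset.mem_range.2 (D.hm_pos j), rfl⟩
    show Quot.mk _ (b (obp_S P j)) = _
    rw [hbu (obp_S P j) j hmem]
  have hinj : Function.Injective f := by
    intro q q' h
    obtain ⟨s, rfl⟩ := Quot.exists_rep q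
    obtain ⟨s', rfl⟩ := Quot.exists_rep q'
    have h' : Quotient.mk (sameCycleSetoid P.σ) (b s) = Quotient.mk (sameCycleSetoid P.σ) (b s') := h
    have hscb : P.σ.SameCycle (b s) (b s') := Quotient.exact h'
    obtain ⟨r, hr, hrs⟩ := hb s
    have hsc1 : e.SameCycle (obp_S P (b s)) s := hreach _ _ _ hrs
    have hex' : ∃ p : ℕ, P.τ^[p] (strand (b s)) = (s' : ℕ) :=
      (obp_orbit_iff hadm e he (b s) (s' : ℕ)).2 ⟨b s', hscb, hbmem s'⟩
    obtain ⟨p, hp⟩ := hex'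
    have hsc2 : e.SameCycle (obp_S P (b s)) s' := hreach _ _ _ hp
    exact Quot.sound (hsc1.symm.trans hsc2)
  have hcard : Nat.card (Quotient (sameCycleSetoid e)) = Nat.card (Quotient (sameCycleSetoid P.σ)) :=
    Nat.card_eq_of_bijective f ⟨hinj, hsurj⟩
  refine ⟨hcard, ?_, part3⟩
  have hle : Nat.card (Quotient (sameCycleSetoid P.σ)) ≤ Nat.card (Fin n) :=
    Nat.card_le_card_of_surjective (Quot.mk _) (fun q => Quot.exists_rep q)
  rw [hcard]
  simpa using hle
end
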